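/- Let α ∈ ℤ and θ ∈ ℝ. If θ + 1/2 ∉ ℤ, then the spectrum of L_{α,θ} equals the interval [−4|cos(πθ)|, 4|cos(πθ)|]. If θ + 1/2 ∈ ℤ, then L_{α,θ} is the zero operator and σ(L_{α,θ}) = {0}. -/

import Mathlib

/-!
For integer `α`, `cos (π (α j + θ)) = (-1) ^ (α j) cos (π θ)`, so `L` is a Jacobi operator with zero
diagonal whose off-diagonal entries all have modulus `2 |cos (π θ)|`; they all vanish exactly when
`θ + 1/2 ∈ ℤ`. Otherwise `L` is self-adjoint of norm at most `4 |cos (π θ)|`, which bounds the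
spectrum. Conversely, the phase `π α j (j - 1) / 2` gauges away the signs `(-1) ^ (α j)`, so
`ψ j = exp (i (π α j (j - 1) / 2 + k j))` is a bounded generalized eigenfunction with eigenvalue
`4 cos (π θ) cos k`. Its truncations to `[-n, n]` have norm `√(2n + 1)` while `(z - L)` maps them to
vectors supported on four sites, with norm bounded independently of `n`; such a Weyl sequence puts
`z` in the spectrum.
-/

open Real Complex
open scoped lp
open Filter Set

theorem lp.norm_sq_eq_tsum {ι : Type*} {E : ι → Type*} [∀ i, NormedAddCommGroup (E i)]
    (f : lp E 2) : ‖f‖ ^ 2 = ∑' i, ‖f i‖ ^ 2 := by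
  simpa only [ENNReal.toReal_ofNat, Real.rpow_two] using lp.norm_rpow_eq_tsum (by norm_num) f

theorem lp.summable_norm_sq {ι : Type*} {E : ι → Type*} [∀ i, NormedAddCommGroup (E i)]
    (f : lp E 2) : Summable fun i => ‖f i‖ ^ 2 := by
  simpa only [ENNReal.toReal_ofNat, Real.rpow_two] using (lp.memℓp f).summable (by norm_num)

theorem lp.norm_sq_eq_sum_of_support_subset {ι : Type*} {E : ι → Type*}
    [∀ i, NormedAddCommGroup (E i)] (f : lp E 2) {s : Finset ι} (hf : ∀ i ∉ s, f i = 0) :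
    ‖f‖ ^ 2 = ∑ i ∈ s, ‖f i‖ ^ 2 := by
  rw [lp.norm_sq_eq_tsum, tsum_eq_sum]
  intro i hi
  simp [hf i hi]

instance lp.instNontrivial {ι E : Type*} [Nonempty ι] [NormedAddCommGroup E] [Nontrivial E]
    {p : ENNReal} : Nontrivial (lp (fun _ : ι => E) p) := by
  classical
  obtain ⟨i⟩ := ‹Nonempty ι›
  obtain ⟨a, ha⟩ := exists_ne (0 : E)
  exact ⟨lp.single p i a, 0, fun h => ha (by simpa using congrArg (· i) h)⟩

theorem mem_spectrum_of_tendsto_norm_atTop {𝕜 E : Type*} [NontriviallyNormedField 𝕜]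
    [NormedAddCommGroup E] [NormedSpace 𝕜 E] {T : E →L[𝕜] E} {z : 𝕜} {B : ℝ} {φ : ℕ → E}
    (hφ : Tendsto (fun n => ‖φ n‖) atTop atTop) (hB : ∀ n, ‖z • φ n - T (φ n)‖ ≤ B) :
    z ∈ spectrum 𝕜 T := by
  by_contra hz
  rw [spectrum.notMem_iff] at hz
  set S := (↑hz.unit⁻¹ : E →L[𝕜] E)
  obtain ⟨n, hn⟩ := (hφ.eventually_gt_atTop (‖S‖ * B)).exists
  have hSφ : S (z • φ n - T (φ n)) = φ n := by
    rw [show z • φ n - T (φ n) = (algebraMap 𝕜 (E →L[𝕜] E) z - T) (φ n) by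
      simp [Algebra.algebraMap_eq_smul_one], ← mul_apply_eq_comp, hz.val_inv_mul,
      one_apply_eq_self]
  have := S.le_opNorm (z • φ n - T (φ n))
  rw [hSφ] at this
  nlinarith [mul_le_mul_of_nonneg_left (hB n) (norm_nonneg S)]

theorem IsSelfAdjoint.spectrum_subset_ofReal_image_Icc {A : Type*} [CStarAlgebra A]
    [Nontrivial A] {a : A} (ha : IsSelfAdjoint a) :
    spectrum ℂ a ⊆ ofReal '' Icc (-‖a‖) ‖a‖ := by
  intro z hz
  obtain ⟨r, -, rfl⟩ := ha.spectrumRestricts.algebraMap_image.symm ▸ hz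
  have := spectrum.subset_closedBall_norm a hz
  simp only [Metric.mem_closedBall, dist_zero_right] at this
  exact ⟨r, abs_le.mp (by simpa using this), rfl⟩

noncomputable def truncateIcc (ψ : ℤ → ℂ) (n : ℕ) : ℓ²(ℤ, ℂ) :=
  ⟨(Icc (-n : ℤ) n).indicator ψ,
    (memℓp_zero ((finite_Icc _ _).subset support_indicator_subset)).of_exponent_ge zero_le⟩

theorem truncateIcc_apply (ψ : ℤ → ℂ) (n : ℕ) (j : ℤ) :
    truncateIcc ψ n j = (Icc (-n : ℤ) n).indicator ψ j :=
  rfl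

theorem norm_truncateIcc_sq {ψ : ℤ → ℂ} (hψ : ∀ j, ‖ψ j‖ = 1) (n : ℕ) :
    ‖truncateIcc ψ n‖ ^ 2 = 2 * n + 1 := by
  have h_supp (j : ℤ) (hj : j ∉ Finset.Icc (-n : ℤ) n) : truncateIcc ψ n j = 0 :=
    indicator_of_notMem (by simpa using hj) ψ
  rw [lp.norm_sq_eq_sum_of_support_subset _ h_supp, Finset.sum_congr rfl (g := fun _ => 1)
    fun j hj => by rw [truncateIcc_apply, indicator_of_mem (by simpa using hj), hψ, one_pow]]
  simp only [Finset.sum_const, Int.card_Icc, nsmul_eq_mul, mul_one]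
  norm_cast
  omega

theorem tendsto_norm_truncateIcc {ψ : ℤ → ℂ} (hψ : ∀ j, ‖ψ j‖ = 1) :
    Tendsto (fun n => ‖truncateIcc ψ n‖) atTop atTop := by
  have h_eq : (fun n => ‖truncateIcc ψ n‖) = fun n : ℕ => √(2 * n + 1) :=
    funext fun n => by rw [← norm_truncateIcc_sq hψ n, Real.sqrt_sq (norm_nonneg _)]
  rw [h_eq]
  exact Real.tendsto_sqrt_atTop.comp
    ((tendsto_natCast_atTop_atTop.const_mul_atTop two_pos).atTop_add tendsto_const_nhds)

def IsJacobiOperator (t : ℤ → ℝ) (L : ℓ²(ℤ, ℂ) →L[ℂ] ℓ²(ℤ, ℂ)) : Prop :=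
  ∀ φ j, L φ j = (t j : ℂ) * φ (j + 1) + (t (j - 1) : ℂ) * φ (j - 1)

namespace IsJacobiOperator

variable {t : ℤ → ℝ} {L : ℓ²(ℤ, ℂ) →L[ℂ] ℓ²(ℤ, ℂ)}

theorem isSelfAdjoint (hL : IsJacobiOperator t L) : IsSelfAdjoint L := by
  rw [ContinuousLinearMap.isSelfAdjoint_iff']
  have h_single (i : ℤ) (a : ℂ) : L.adjoint (lp.single 2 i a) = L (lp.single 2 i a) := by
    ext j
    have h_adj : L.adjoint (lp.single 2 i a) j = a * starRingEnd ℂ (L (lp.single 2 j 1) i) := by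
      simpa [lp.inner_single_left, lp.inner_single_right] using
        L.adjoint_inner_right (lp.single 2 j 1) (lp.single 2 i a)
    rw [h_adj, hL, hL]
    simp only [lp.single_apply, Pi.single_apply]
    split_ifs <;> first | omega | (subst_vars; simp [mul_comm])
  ext1 f
  have hf := lp.hasSum_single ENNReal.ofNat_ne_top f
  exact (hf.mapL L.adjoint).unique (by simpa only [h_single] using hf.mapL L)

theorem norm_le (hL : IsJacobiOperator t L) {C : ℝ} (ht : ∀ j, |t j| ≤ C) : ‖L‖ ≤ 2 * C := by
  have hC : 0 ≤ C := (abs_nonneg _).trans (ht 0)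
  refine L.opNorm_le_bound (by positivity) fun f => ?_
  have h_shift (e : ℤ ≃ ℤ) : HasSum (fun j => ‖f (e j)‖ ^ 2) (‖f‖ ^ 2) := by
    rw [lp.norm_sq_eq_tsum]
    exact e.hasSum_iff.mpr (lp.summable_norm_sq f).hasSum
  have h_pointwise (j : ℤ) :
      ‖L f j‖ ^ 2 ≤ 2 * C ^ 2 * ‖f (j + 1)‖ ^ 2 + 2 * C ^ 2 * ‖f (j - 1)‖ ^ 2 := by
    have h₁ : ‖(t j : ℂ) * f (j + 1)‖ ≤ C * ‖f (j + 1)‖ := by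
      rw [norm_mul, norm_real, Real.norm_eq_abs]; gcongr; exact ht j
    have h₂ : ‖(t (j - 1) : ℂ) * f (j - 1)‖ ≤ C * ‖f (j - 1)‖ := by
      rw [norm_mul, norm_real, Real.norm_eq_abs]; gcongr; exact ht (j - 1)
    calc ‖L f j‖ ^ 2 ≤ (C * ‖f (j + 1)‖ + C * ‖f (j - 1)‖) ^ 2 := by
          rw [hL]; gcongr; exact (norm_add_le _ _).trans (add_le_add h₁ h₂)
      _ ≤ 2 * C ^ 2 * ‖f (j + 1)‖ ^ 2 + 2 * C ^ 2 * ‖f (j - 1)‖ ^ 2 := by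
          nlinarith [sq_nonneg (C * ‖f (j + 1)‖ - C * ‖f (j - 1)‖)]
  have h_sum := ((h_shift (Equiv.addRight 1)).mul_left (2 * C ^ 2)).add
    ((h_shift (Equiv.subRight 1)).mul_left (2 * C ^ 2))
  refine pow_le_pow_iff_left₀ (norm_nonneg _) (by positivity) two_ne_zero |>.mp ?_
  calc ‖L f‖ ^ 2 ≤ 2 * C ^ 2 * ‖f‖ ^ 2 + 2 * C ^ 2 * ‖f‖ ^ 2 := by
        rw [lp.norm_sq_eq_tsum]
        exact hasSum_le h_pointwise (lp.summable_norm_sq _).hasSum h_sum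
    _ = (2 * C * ‖f‖) ^ 2 := by ring

theorem abs_le_norm (hL : IsJacobiOperator t L) (j : ℤ) : |t j| ≤ ‖L‖ := by
  set e : ℓ²(ℤ, ℂ) := lp.single 2 (j + 1) 1
  have h := lp.norm_apply_le_norm two_ne_zero (L e) j
  rw [hL] at h
  simp only [e, lp.single_apply, Pi.single_eq_same] at h
  rw [Pi.single_eq_of_ne (by omega : j - 1 ≠ j + 1), mul_one, mul_zero, add_zero, norm_real,
    Real.norm_eq_abs] at h
  calc |t j| ≤ ‖L e‖ := h
    _ ≤ ‖L‖ * ‖e‖ := L.le_opNorm e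
    _ = ‖L‖ := by rw [lp.norm_single (by norm_num), norm_one, mul_one]

theorem mem_spectrum_of_eigenfunction (hL : IsJacobiOperator t L) {z : ℂ} {ψ : ℤ → ℂ}
    (hψ : ∀ j, ‖ψ j‖ = 1)
    (heig : ∀ j, (t j : ℂ) * ψ (j + 1) + (t (j - 1) : ℂ) * ψ (j - 1) = z * ψ j) :
    z ∈ spectrum ℂ L := by
  set M := ‖z‖ + 2 * ‖L‖
  refine mem_spectrum_of_tendsto_norm_atTop (tendsto_norm_truncateIcc hψ) (B := 2 * M)
    fun n => ?_
  set I := Icc (-n : ℤ) n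
  set u := z • truncateIcc ψ n - L (truncateIcc ψ n)
  set S : Finset ℤ := {-(n : ℤ) - 1, -(n : ℤ), (n : ℤ), (n : ℤ) + 1}
  have hu_apply (j : ℤ) : u j = z * I.indicator ψ j -
      ((t j : ℂ) * I.indicator ψ (j + 1) + (t (j - 1) : ℂ) * I.indicator ψ (j - 1)) := by
    simp only [u, lp.coeFn_sub, lp.coeFn_smul, Pi.sub_apply, Pi.smul_apply, smul_eq_mul,
      truncateIcc_apply]
    rw [hL]
    rfl
  have h_ind (j : ℤ) : ‖I.indicator ψ j‖ ≤ 1 := (norm_indicator_le_norm_self ψ j).trans (hψ j).le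
  have hu_le (j : ℤ) : ‖u j‖ ≤ M := by
    calc ‖u j‖ ≤ ‖z‖ * ‖I.indicator ψ j‖ +
          (|t j| * ‖I.indicator ψ (j + 1)‖ + |t (j - 1)| * ‖I.indicator ψ (j - 1)‖) := by
          rw [hu_apply]
          refine (norm_sub_le _ _).trans ?_
          rw [norm_mul]
          gcongr
          refine (norm_add_le _ _).trans ?_
          simp only [norm_mul, norm_real, Real.norm_eq_abs, le_refl]
      _ ≤ ‖z‖ * 1 + (‖L‖ * 1 + ‖L‖ * 1) := by
          gcongr <;> first | exact h_ind _ | exact hL.abs_le_norm _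
      _ = M := by ring
  have hu_supp (j : ℤ) (hj : j ∉ S) : u j = 0 := by
    simp only [S, Finset.mem_insert, Finset.mem_singleton, not_or] at hj
    have h_in_or_out : (j - 1 ∈ I ∧ j ∈ I ∧ j + 1 ∈ I) ∨ (j - 1 ∉ I ∧ j ∉ I ∧ j + 1 ∉ I) := by
      simp only [I, mem_Icc]
      omega
    rcases h_in_or_out with ⟨h₁, h₂, h₃⟩ | ⟨h₁, h₂, h₃⟩
    · simp [hu_apply, indicator_of_mem, h₁, h₂, h₃, heig]
    · simp [hu_apply, indicator_of_notMem, h₁, h₂, h₃]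
  refine pow_le_pow_iff_left₀ (norm_nonneg _) (by positivity) two_ne_zero |>.mp ?_
  rw [lp.norm_sq_eq_sum_of_support_subset u hu_supp]
  calc ∑ j ∈ S, ‖u j‖ ^ 2 ≤ ∑ j ∈ S, M ^ 2 :=
        Finset.sum_le_sum fun j _ => pow_le_pow_left₀ (norm_nonneg _) (hu_le j) 2
    _ ≤ 4 * M ^ 2 := by
        rw [Finset.sum_const, nsmul_eq_mul]
        gcongr
        exact_mod_cast Finset.card_le_four
    _ = (2 * M) ^ 2 := by ring

end IsJacobiOperator

theorem cos_pi_mul_int_add (n : ℤ) (θ : ℝ) :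
    Real.cos (π * (n + θ)) = (-1 : ℝ) ^ n * Real.cos (π * θ) := by
  rw [← cos_add_int_mul_pi]
  congr 1
  ring

theorem cos_pi_mul_eq_zero_iff (θ : ℝ) : Real.cos (π * θ) = 0 ↔ ∃ m : ℤ, θ + 1 / 2 = m := by
  rw [Real.cos_eq_zero_iff]
  constructor
  · rintro ⟨k, hk⟩
    refine ⟨k + 1, ?_⟩
    have := mul_left_cancel₀ pi_ne_zero (hk.trans (by ring : _ = π * (k + 1 / 2)))
    push_cast
    linarith
  · rintro ⟨m, hm⟩
    exact ⟨m - 1, by rw [show θ = m - 1 / 2 by linarith]; push_cast; ring⟩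

noncomputable def fluxCoeff (α : ℤ) (θ : ℝ) (j : ℤ) : ℝ := 2 * Real.cos (π * (α * j + θ))

theorem fluxCoeff_eq (α : ℤ) (θ : ℝ) (j : ℤ) :
    fluxCoeff α θ j = 2 * (-1 : ℝ) ^ (α * j) * Real.cos (π * θ) := by
  rw [fluxCoeff, mul_assoc, ← cos_pi_mul_int_add, Int.cast_mul]

theorem abs_fluxCoeff (α : ℤ) (θ : ℝ) (j : ℤ) :
    |fluxCoeff α θ j| = 2 * |Real.cos (π * θ)| := by
  rw [fluxCoeff_eq, abs_mul, abs_mul, abs_neg_one_zpow, abs_two, mul_one]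

noncomputable def fluxEigenfunction (α : ℤ) (k : ℝ) (j : ℤ) : ℂ :=
  cexp (↑(π * α * j * (j - 1) / 2 + k * j) * I)

theorem norm_fluxEigenfunction (α : ℤ) (k : ℝ) (j : ℤ) : ‖fluxEigenfunction α k j‖ = 1 :=
  norm_exp_ofReal_mul_I _

theorem cexp_pi_mul_int_mul_I (n : ℤ) : cexp (π * n * I) = (-1) ^ n := by
  rw [mul_comm (π : ℂ), mul_assoc, exp_int_mul, exp_pi_mul_I]

theorem fluxEigenfunction_add_one (α : ℤ) (k : ℝ) (j : ℤ) :
    fluxEigenfunction α k (j + 1) = fluxEigenfunction α k j * (-1) ^ (α * j) * cexp (k * I) := by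
  rw [fluxEigenfunction, fluxEigenfunction, ← cexp_pi_mul_int_mul_I, ← Complex.exp_add,
    ← Complex.exp_add]
  congr 1
  push_cast
  ring

theorem fluxEigenfunction_sub_one (α : ℤ) (k : ℝ) (j : ℤ) :
    fluxEigenfunction α k (j - 1) =
      fluxEigenfunction α k j * (-1) ^ (-(α * (j - 1))) * cexp (-k * I) := by
  rw [fluxEigenfunction, fluxEigenfunction, ← cexp_pi_mul_int_mul_I, ← Complex.exp_add,
    ← Complex.exp_add]
  congr 1
  push_cast
  ring

theorem fluxCoeff_mul_fluxEigenfunction (α : ℤ) (θ k : ℝ) (j : ℤ) :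
    (fluxCoeff α θ j : ℂ) * fluxEigenfunction α k (j + 1) +
        (fluxCoeff α θ (j - 1) : ℂ) * fluxEigenfunction α k (j - 1) =
      ↑(4 * Real.cos (π * θ) * Real.cos k) * fluxEigenfunction α k j := by
  have h_sq (m : ℤ) : (-1 : ℂ) ^ m * (-1) ^ m = 1 := by rw [← mul_zpow]; norm_num
  have h_inv (m : ℤ) : (-1 : ℂ) ^ m * (-1) ^ (-m) = 1 := by rw [← zpow_add₀ (by norm_num)]; simp
  rw [fluxEigenfunction_add_one, fluxEigenfunction_sub_one, fluxCoeff_eq, fluxCoeff_eq]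
  linear_combination (norm := (push_cast; ring))
    (2 * Real.cos (π * θ) * fluxEigenfunction α k j) *
      (cexp (k * I) * h_sq (α * j) + cexp (-k * I) * h_inv (α * (j - 1)) - Complex.two_cos (k : ℂ))

/-- For integer `α`: if `θ + 1/2 ∉ ℤ` then
`σ(L_{α,θ}) = [−4|cos(πθ)|, 4|cos(πθ)|]`; if `θ + 1/2 ∈ ℤ` then `L_{α,θ} = 0` and
`σ(L_{α,θ}) = {0}`. -/
theorem integer_flux_spectrum
    (α : ℤ) (θ : ℝ)
    (L : lp (fun _ : ℤ => ℂ) 2 →L[ℂ] lp (fun _ : ℤ => ℂ) 2)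
    (hL : ∀ (φ : lp (fun _ : ℤ => ℂ) 2) (j : ℤ),
      L φ j = ((2 * Real.cos (π * ((α : ℝ) * (j : ℝ) + θ)) : ℝ) : ℂ) * φ (j + 1)
        + ((2 * Real.cos (π * ((α : ℝ) * ((j : ℝ) - 1) + θ)) : ℝ) : ℂ) * φ (j - 1)) :
    ((¬ ∃ m : ℤ, θ + 1 / 2 = (m : ℝ)) →
      spectrum ℂ L = Complex.ofReal ''
        Set.Icc (-(4 * |Real.cos (π * θ)|)) (4 * |Real.cos (π * θ)|)) ∧
    ((∃ m : ℤ, θ + 1 / 2 = (m : ℝ)) →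
      L = 0 ∧ spectrum ℂ L = {0}) := by
  have hJ : IsJacobiOperator (fluxCoeff α θ) L := fun φ j => by
    rw [hL, fluxCoeff, fluxCoeff, Int.cast_sub, Int.cast_one]
  rw [← cos_pi_mul_eq_zero_iff]
  refine ⟨fun hc => Subset.antisymm ?_ ?_, fun hc => ?_⟩
  · have h_norm : ‖L‖ ≤ 4 * |Real.cos (π * θ)| := by
      linarith [hJ.norm_le fun j => (abs_fluxCoeff α θ j).le]
    exact hJ.isSelfAdjoint.spectrum_subset_ofReal_image_Icc.trans
      (image_mono (Icc_subset_Icc (neg_le_neg h_norm) h_norm))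
  · rintro _ ⟨x, hx, rfl⟩
    have hy : |x / (4 * Real.cos (π * θ))| ≤ 1 := by
      rw [abs_div, abs_mul, abs_of_pos (four_pos : (0 : ℝ) < 4), div_le_one (by positivity)]
      exact abs_le.mpr hx
    have hk : 4 * Real.cos (π * θ) * Real.cos (arccos (x / (4 * Real.cos (π * θ)))) = x := by
      rw [cos_arccos (abs_le.mp hy).1 (abs_le.mp hy).2]
      field_simp
    exact hJ.mem_spectrum_of_eigenfunction (norm_fluxEigenfunction α _) fun j => by
      rw [fluxCoeff_mul_fluxEigenfunction, hk]
  · have hL0 : L = 0 := by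
      ext φ j
      rw [hJ, fluxCoeff_eq, fluxCoeff_eq, hc]
      simp
    exact ⟨hL0, hL0 ▸ spectrum.zero_eq⟩
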